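/- Let t satisfy t² = −1 in a commutative ring, let (I,·) be a bar-consistent anisotropic super Cartan datum with bilinear form φ as above, and let ν, ν' ∈ ℤ_{≥0}[I]. Then t^{φ(ν',ν) − φ(ν,ν')} = (−1)^{(ν·ν')/2 + p(ν)p(ν')}, where p(ν) = ∑ᵢ cᵢ p(i) mod 2 for ν = ∑ᵢ cᵢ i. -/

import Mathlib

/-!
On generators, `φ(j,i) - φ(i,j) ≡ i·j + 2 p(i) p(j) (mod 4)`, by a case split on the order of
`i` and `j`, using that `i·j` is even. Both sides are bilinear, so the same congruence holds for
`ν, ν'`, i.e. the exponent of `t` is `2 ((ν·ν')/2 + p(ν) p(ν')) (mod 4)`. As `t ^ 2 = -1`, `t` has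
order dividing `4` and the claim follows.
-/

/-- A bar-consistent anisotropic super Cartan datum (see paper, Definition 2.1). -/
structure SuperCartanDatum (I : Type*) where
  form : I → I → ℤ
  d : I → ℤ
  a : I → I → ℤ
  p : I → ℤ
  form_symm : ∀ i j, form i j = form j i
  d_def : ∀ i, form i i = 2 * d i
  d_pos : ∀ i, 0 < d i
  a_def : ∀ i j, 2 * form i j = form i i * a i j
  a_nonpos : ∀ i j, i ≠ j → a i j ≤ 0
  p_range : ∀ i, p i = 0 ∨ p i = 1
  aniso : ∀ i j, p i = 1 → 2 ∣ a i j
  barcons : ∀ i, 2 ∣ (d i - p i)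

/-- The form `φ` on generators, relative to a fixed total order on `I`. -/
def phi {I : Type*} [LinearOrder I] (D : SuperCartanDatum I) (i j : I) : ℤ :=
  if j < i then D.d i * D.a i j
  else if j = i then D.d i
  else -2 * D.p i * D.p j

/-- The bilinear extension of `φ` to `ℤ_{≥0}[I]`. -/
def phiExt {I : Type*} [LinearOrder I] (D : SuperCartanDatum I) (ν ν' : I →₀ ℕ) : ℤ :=
  ν.sum fun i c => ν'.sum fun j c' => (c : ℤ) * (c' : ℤ) * phi D i j

/-- The bilinear extension of the Cartan form `·` to `ℤ_{≥0}[I]`. -/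
def formExt {I : Type*} (D : SuperCartanDatum I) (ν ν' : I →₀ ℕ) : ℤ :=
  ν.sum fun i c => ν'.sum fun j c' => (c : ℤ) * (c' : ℤ) * D.form i j

/-- The additive extension of the parity `p` to `ℤ_{≥0}[I]`. -/
def pExt {I : Type*} (D : SuperCartanDatum I) (ν : I →₀ ℕ) : ℤ :=
  ν.sum fun i c => (c : ℤ) * D.p i

namespace SuperCartanDatum

variable {I : Type*} (D : SuperCartanDatum I)

theorem form_eq_d_mul_a (i j : I) : D.form i j = D.d i * D.a i j := by
  have h := D.a_def i j
  rw [D.d_def i, mul_assoc] at h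
  exact mul_left_cancel₀ two_ne_zero h

/-- Even parity forces `d i` even (bar-consistency), odd parity forces `a i j` even
(anisotropy). -/
theorem two_dvd_form (i j : I) : 2 ∣ D.form i j := by
  rw [form_eq_d_mul_a]
  rcases D.p_range i with hp | hp
  · exact (by simpa [hp] using D.barcons i : (2 : ℤ) ∣ D.d i).mul_right _
  · exact (D.aniso i j hp).mul_left _

theorem p_mul_self (i : I) : D.p i * D.p i = D.p i := by
  rcases D.p_range i with hp | hp <;> simp [hp]

end SuperCartanDatum

theorem phi_sub_phi_modEq {I : Type*} [LinearOrder I] (D : SuperCartanDatum I) (i j : I) :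
    phi D j i - phi D i j ≡ D.form i j + 2 * (D.p i * D.p j) [ZMOD 4] := by
  rw [Int.modEq_iff_dvd]
  rcases lt_trichotomy i j with hij | rfl | hji
  · simp only [phi, if_pos hij, if_neg (not_lt.mpr hij.le), if_neg hij.ne',
      D.form_symm i j, D.form_eq_d_mul_a]
    exact ⟨0, by ring⟩
  · obtain ⟨m, hm⟩ := D.barcons i
    have hp := D.p_mul_self i
    simp only [phi, lt_irrefl, if_false, if_true, D.d_def]
    exact ⟨D.p i + m, by linear_combination 2 * hm + 2 * hp⟩
  · obtain ⟨m, hm⟩ := D.two_dvd_form i j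
    simp only [phi, if_pos hji, if_neg (not_lt.mpr hji.le), if_neg hji.ne']
    rw [D.form_eq_d_mul_a] at hm ⊢
    exact ⟨D.p i * D.p j + m, by linear_combination 2 * hm⟩

section BilinExt

variable {I : Type*}

/-- The bilinear extension to `ℤ_{≥0}[I]` of a pairing `f` of the generators; `phiExt` and
`formExt` are its instances. -/
def bilinExt (f : I → I → ℤ) (ν ν' : I →₀ ℕ) : ℤ :=
  ν.sum fun i c => ν'.sum fun j c' => (c : ℤ) * (c' : ℤ) * f i j

theorem bilinExt_swap (f : I → I → ℤ) (ν ν' : I →₀ ℕ) :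
    bilinExt f ν' ν = bilinExt (fun i j => f j i) ν ν' := by
  rw [bilinExt, Finsupp.sum_comm]
  exact Finsupp.sum_congr fun i _ => Finsupp.sum_congr fun j _ => by rw [mul_comm (ν' j : ℤ)]

theorem bilinExt_sub (f g : I → I → ℤ) (ν ν' : I →₀ ℕ) :
    bilinExt f ν ν' - bilinExt g ν ν' = bilinExt (fun i j => f i j - g i j) ν ν' := by
  simp only [bilinExt, Finsupp.sum, ← Finset.sum_sub_distrib, mul_sub]

theorem bilinExt_add (f g : I → I → ℤ) (ν ν' : I →₀ ℕ) :
    bilinExt f ν ν' + bilinExt g ν ν' = bilinExt (fun i j => f i j + g i j) ν ν' := by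
  simp only [bilinExt, Finsupp.sum, ← Finset.sum_add_distrib, mul_add]

theorem bilinExt_const_mul (n : ℤ) (f : I → I → ℤ) (ν ν' : I →₀ ℕ) :
    n * bilinExt f ν ν' = bilinExt (fun i j => n * f i j) ν ν' := by
  simp only [bilinExt, Finsupp.sum, Finset.mul_sum, mul_left_comm n]

theorem bilinExt_modEq {n : ℤ} {f g : I → I → ℤ} (h : ∀ i j, f i j ≡ g i j [ZMOD n])
    (ν ν' : I →₀ ℕ) : bilinExt f ν ν' ≡ bilinExt g ν ν' [ZMOD n] :=
  Int.ModEq.sum fun i _ => Int.ModEq.sum fun j _ => (h i j).mul_left _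

theorem dvd_bilinExt {n : ℤ} {f : I → I → ℤ} (h : ∀ i j, n ∣ f i j) (ν ν' : I →₀ ℕ) :
    n ∣ bilinExt f ν ν' :=
  Finset.dvd_sum fun i _ => Finset.dvd_sum fun j _ => (h i j).mul_left _

theorem pExt_mul_pExt (D : SuperCartanDatum I) (ν ν' : I →₀ ℕ) :
    pExt D ν * pExt D ν' = bilinExt (fun i j => D.p i * D.p j) ν ν' := by
  simp only [pExt, bilinExt, Finsupp.sum, Finset.sum_mul_sum]
  exact Finset.sum_congr rfl fun i _ => Finset.sum_congr rfl fun j _ => by ring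

end BilinExt

theorem phiExt_sub_phiExt_modEq {I : Type*} [LinearOrder I] (D : SuperCartanDatum I)
    (ν ν' : I →₀ ℕ) :
    phiExt D ν' ν - phiExt D ν ν' ≡ 2 * (formExt D ν ν' / 2 + pExt D ν * pExt D ν') [ZMOD 4] := by
  have hform : 2 * (formExt D ν ν' / 2) = formExt D ν ν' :=
    Int.mul_ediv_cancel' (dvd_bilinExt D.two_dvd_form ν ν')
  have hrhs : 2 * (formExt D ν ν' / 2 + pExt D ν * pExt D ν') =
      bilinExt (fun i j => D.form i j + 2 * (D.p i * D.p j)) ν ν' := by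
    rw [mul_add, hform, pExt_mul_pExt, bilinExt_const_mul]
    exact bilinExt_add _ _ ν ν'
  have hlhs : phiExt D ν' ν - phiExt D ν ν' =
      bilinExt (fun i j => phi D j i - phi D i j) ν ν' :=
    (congrArg (· - phiExt D ν ν') (bilinExt_swap (phi D) ν ν')).trans (bilinExt_sub _ _ ν ν')
  rw [hlhs, hrhs]
  exact bilinExt_modEq (phi_sub_phi_modEq D) ν ν'

theorem zpow_eq_neg_one_zpow_of_sq_eq_neg_one {G : Type*} [Group G] [HasDistribNeg G] {t : G}
    (ht : t ^ 2 = -1) {m q : ℤ} (hm : m ≡ 2 * q [ZMOD 4]) : t ^ m = (-1 : G) ^ q := by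
  obtain ⟨k, hk⟩ := (Int.modEq_iff_dvd.mp hm.symm)
  have ht2 : t ^ (2 : ℤ) = -1 := by rw [zpow_ofNat, ht]
  have ht4 : t ^ (4 : ℤ) = 1 := by
    rw [show (4 : ℤ) = 2 * 2 by norm_num, zpow_mul, ht2, zpow_ofNat, neg_one_sq]
  rw [show m = 2 * q + 4 * k by omega, zpow_add, zpow_mul, zpow_mul, ht2, ht4, one_zpow, mul_one]

/-- If `t² = −1`, then for `ν, ν' ∈ ℤ_{≥0}[I]`,
`t^{φ(ν',ν) − φ(ν,ν')} = (−1)^{(ν·ν')/2 + p(ν)p(ν')}`. -/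
theorem stmt13 {I : Type*} [LinearOrder I] {R : Type*} [CommRing R]
    (D : SuperCartanDatum I) (t : Rˣ) (ht : (t : R) ^ 2 = -1) (ν ν' : I →₀ ℕ) :
    t ^ (phiExt D ν' ν - phiExt D ν ν') =
      (-1 : Rˣ) ^ (formExt D ν ν' / 2 + pExt D ν * pExt D ν') := by
  have ht' : t ^ 2 = -1 := Units.ext (by simpa using ht)
  exact zpow_eq_neg_one_zpow_of_sq_eq_neg_one ht' (phiExt_sub_phiExt_modEq D ν ν')
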